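/- For star bodies L_1, ..., L_n in R^n and 1 ≤ m ≤ n, the dual Aleksandrov–Fenchel inequality holds: Ṽ(L_1,...,L_n)^m ≤ ∏_{j=1}^m Ṽ(L_j,...,L_j, L_{m+1},...,L_n), with equality if and only if L_1, ..., L_m are dilates of one another. -/

import Mathlib

open MeasureTheory Metric
open scoped RealInnerProductSpace

noncomputable section

/-- Euclidean space ℝⁿ. -/
abbrev Euc (n : ℕ) := EuclideanSpace ℝ (Fin n)

/-- The unit sphere S^{n-1} ⊂ ℝⁿ. -/
abbrev Sph (n : ℕ) := Metric.sphere (0 : Euc n) 1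

/-- Spherical Lebesgue measure on S^{n-1}. -/
def sphMeasure (n : ℕ) [NeZero n] : Measure (Sph n) := volume.toSphere

/-- A star body (with respect to the origin) in ℝⁿ, described by its continuous
positive radial function on the unit sphere. -/
structure StarBody (n : ℕ) where
  radial : C(Sph n, ℝ)
  pos : ∀ u, 0 < radial u

/-- Two star bodies are dilates if their radial functions are proportional. -/
def Dilates (n : ℕ) (K L : StarBody n) : Prop :=
  ∃ c : ℝ, 0 < c ∧ ∀ u, K.radial u = c * L.radial u

/-- The dual mixed volume Ṽ(L_1,…,L_n) = (1/n) ∫ ρ(L_1,u)⋯ρ(L_n,u) du. -/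
def dualMixedVol (n : ℕ) [NeZero n] (L : Fin n → StarBody n) : ℝ :=
  (1 / n : ℝ) * ∫ u, ∏ i, (L i).radial u ∂(sphMeasure n)

/-!
Write `ρⱼ` for the radial function of `Lⱼ` and `w = ρ(L_{m+1}) ⋯ ρ(Lₙ)`. With
`fⱼ = ρⱼ w^{1/m}` the inequality is Hölder's inequality `(∫ f₁ ⋯ fₘ)^m ≤ ∏ⱼ ∫ fⱼ^m` on the sphere.
After dividing each `fⱼ` by its `L^m` norm, Hölder's inequality is the integral of the AM-GM
inequality `f₁ ⋯ fₘ ≤ (f₁^m + ⋯ + fₘ^m) / m`. In the case of equality the AM-GM gap, a continuous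
nonnegative function with zero integral, vanishes everywhere because spherical measure charges
every nonempty open set; so the normalised `fⱼ` coincide, i.e. the `ρⱼ` are proportional.
-/

open Finset

section AMGM

variable {ι : Type*} [Fintype ι] [Nonempty ι]

lemma sum_inv_card_eq_one : ∑ _i : ι, (Fintype.card ι : ℝ)⁻¹ = 1 := by
  simp [Fintype.card_ne_zero]

lemma prod_pow_card_rpow_inv {y : ι → ℝ} (hy : ∀ i, 0 ≤ y i) :
    ∏ i, (y i ^ Fintype.card ι) ^ (Fintype.card ι : ℝ)⁻¹ = ∏ i, y i :=
  prod_congr rfl fun i _ => Real.pow_rpow_inv_natCast (hy i) Fintype.card_ne_zero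

lemma prod_le_sum_pow_card_div_card {y : ι → ℝ} (hy : ∀ i, 0 ≤ y i) :
    ∏ i, y i ≤ (∑ i, y i ^ Fintype.card ι) / Fintype.card ι := by
  have := Real.geom_mean_le_arith_mean_weighted univ (fun _ => (Fintype.card ι : ℝ)⁻¹)
    (fun i => y i ^ Fintype.card ι) (fun _ _ => by positivity) sum_inv_card_eq_one
    (fun i _ => pow_nonneg (hy i) _)
  rwa [prod_pow_card_rpow_inv hy, ← mul_sum, inv_mul_eq_div] at this

lemma prod_eq_sum_pow_card_div_card_iff {y : ι → ℝ} (hy : ∀ i, 0 ≤ y i) :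
    ∏ i, y i = (∑ i, y i ^ Fintype.card ι) / Fintype.card ι ↔ ∀ i j, y i = y j := by
  have := Real.geom_mean_eq_arith_mean_weighted_iff_of_pos univ
    (fun _ => (Fintype.card ι : ℝ)⁻¹) (fun i => y i ^ Fintype.card ι)
    (fun _ _ => by positivity) sum_inv_card_eq_one (fun i _ => pow_nonneg (hy i) _)
  rw [prod_pow_card_rpow_inv hy, ← mul_sum, inv_mul_eq_div] at this
  simpa only [mem_univ, true_imp_iff, pow_left_inj₀ (hy _) (hy _) Fintype.card_ne_zero] using this

end AMGM

section LmNorm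

variable {X : Type*} [MeasurableSpace X] {μ : Measure X}

def lmNorm (μ : Measure X) (m : ℕ) (f : X → ℝ) : ℝ := (∫ x, f x ^ m ∂μ) ^ (m : ℝ)⁻¹

lemma lmNorm_pow {f : X → ℝ} (hf : ∀ x, 0 ≤ f x) {m : ℕ} (hm : m ≠ 0) :
    lmNorm μ m f ^ m = ∫ x, f x ^ m ∂μ :=
  Real.rpow_inv_natCast_pow (integral_nonneg fun x => pow_nonneg (hf x) m) hm

lemma lmNorm_const_mul {f : X → ℝ} (hf : ∀ x, 0 ≤ f x) {m : ℕ} (hm : m ≠ 0) {d : ℝ}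
    (hd : 0 ≤ d) : lmNorm μ m (fun x => d * f x) = d * lmNorm μ m f := by
  simp only [lmNorm, mul_pow, integral_const_mul]
  rw [Real.mul_rpow (pow_nonneg hd m) (integral_nonneg fun x => pow_nonneg (hf x) m),
    Real.pow_rpow_inv_natCast hd hm]

end LmNorm

section Holder

variable {X : Type*} [TopologicalSpace X] [CompactSpace X] [MeasurableSpace X]
  [OpensMeasurableSpace X] {μ : Measure X} [IsFiniteMeasure μ] {ι : Type*} [Fintype ι] [Nonempty ι]

lemma Continuous.integrable_of_compactSpace {f : X → ℝ} (hf : Continuous f) : Integrable f μ :=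
  hf.integrable_of_hasCompactSupport (.of_compactSpace f)

lemma integral_amgm_gap {g : ι → X → ℝ} (hg : ∀ i, Continuous (g i))
    (hg1 : ∀ i, ∫ x, g i x ^ Fintype.card ι ∂μ = 1) :
    ∫ x, ((∑ i, g i x ^ Fintype.card ι) / Fintype.card ι - ∏ i, g i x) ∂μ =
      1 - ∫ x, ∏ i, g i x ∂μ := by
  have hpow : ∀ i ∈ univ, Integrable (fun x => g i x ^ Fintype.card ι) μ :=
    fun i _ => ((hg i).pow _).integrable_of_compactSpace
  have hmean : Integrable (fun x => (∑ i, g i x ^ Fintype.card ι) / Fintype.card ι) μ :=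
    ((continuous_finsetSum _ fun i _ => (hg i).pow _).div_const _).integrable_of_compactSpace
  have hprod : Integrable (fun x => ∏ i, g i x) μ :=
    (continuous_finsetProd _ fun i _ => hg i).integrable_of_compactSpace
  rw [integral_sub hmean hprod, integral_div, integral_finsetSum _ hpow]
  simp [hg1, Fintype.card_ne_zero]

lemma integral_prod_le_one {g : ι → X → ℝ} (hg : ∀ i, Continuous (g i))
    (hg0 : ∀ i x, 0 ≤ g i x) (hg1 : ∀ i, ∫ x, g i x ^ Fintype.card ι ∂μ = 1) :
    ∫ x, ∏ i, g i x ∂μ ≤ 1 := by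
  have := integral_nonneg (μ := μ) fun x =>
    sub_nonneg.2 (prod_le_sum_pow_card_div_card fun i => hg0 i x)
  rw [integral_amgm_gap hg hg1] at this
  linarith

lemma integral_prod_eq_one_iff [μ.IsOpenPosMeasure] {g : ι → X → ℝ}
    (hg : ∀ i, Continuous (g i)) (hg0 : ∀ i x, 0 ≤ g i x)
    (hg1 : ∀ i, ∫ x, g i x ^ Fintype.card ι ∂μ = 1) :
    ∫ x, ∏ i, g i x ∂μ = 1 ↔ ∀ i j, g i = g j := by
  set gap := fun x => (∑ i, g i x ^ Fintype.card ι) / Fintype.card ι - ∏ i, g i x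
  have hgap : Continuous gap := ((continuous_finsetSum _ fun i _ => (hg i).pow _).div_const _).sub
    (continuous_finsetProd _ fun i _ => hg i)
  have hgap0 : 0 ≤ gap := fun x => sub_nonneg.2 (prod_le_sum_pow_card_div_card fun i => hg0 i x)
  calc ∫ x, ∏ i, g i x ∂μ = 1 ↔ ∫ x, gap x ∂μ = 0 := by
        rw [integral_amgm_gap hg hg1, sub_eq_zero, eq_comm]
    _ ↔ gap = 0 := by
        rw [integral_eq_zero_iff_of_nonneg hgap0 hgap.integrable_of_compactSpace,
          hgap.ae_eq_iff_eq μ continuous_zero]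
    _ ↔ ∀ x i j, g i x = g j x := by
        simp only [funext_iff, Pi.zero_apply, gap, sub_eq_zero, eq_comm (b := ∏ i, g i _),
          prod_eq_sum_pow_card_div_card_iff (hg0 · _)]
    _ ↔ ∀ i j, g i = g j := by
        simp only [funext_iff]; exact forall_comm.trans (forall_congr' fun _ => forall_comm)

variable [Nonempty X] [μ.IsOpenPosMeasure]

lemma integral_pow_pos {f : X → ℝ} (hf : Continuous f) (hpos : ∀ x, 0 < f x) (m : ℕ) :
    0 < ∫ x, f x ^ m ∂μ :=
  integral_pos_of_integrable_nonneg_nonzero (x := Classical.arbitrary X) (hf.pow m)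
    (hf.pow m).integrable_of_compactSpace (fun x => pow_nonneg (hpos x).le m)
    (pow_pos (hpos _) m).ne'

lemma lmNorm_pos {f : X → ℝ} (hf : Continuous f) (hpos : ∀ x, 0 < f x) (m : ℕ) :
    0 < lmNorm μ m f :=
  Real.rpow_pos_of_pos (integral_pow_pos hf hpos m) _

lemma integral_div_lmNorm_pow {f : X → ℝ} (hf : Continuous f) (hpos : ∀ x, 0 < f x) {m : ℕ}
    (hm : m ≠ 0) : ∫ x, (f x / lmNorm μ m f) ^ m ∂μ = 1 := by
  simp only [div_pow, integral_div, lmNorm_pow (fun x => (hpos x).le) hm,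
    div_self (integral_pow_pos hf hpos m).ne']

lemma div_lmNorm_eq_iff {f g : X → ℝ} (hf : Continuous f) (hg : Continuous g)
    (hfpos : ∀ x, 0 < f x) (hgpos : ∀ x, 0 < g x) {m : ℕ} (hm : m ≠ 0) :
    (fun x => f x / lmNorm μ m f) = (fun x => g x / lmNorm μ m g) ↔
      ∃ d, 0 < d ∧ ∀ x, f x = d * g x := by
  have hcf := lmNorm_pos (μ := μ) hf hfpos m
  have hcg := lmNorm_pos (μ := μ) hg hgpos m
  constructor
  · intro h
    refine ⟨lmNorm μ m f / lmNorm μ m g, div_pos hcf hcg, fun x => ?_⟩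
    have := congrFun h x
    field_simp at this ⊢
    linarith
  · rintro ⟨d, hd, hfg⟩
    obtain rfl : f = fun x => d * g x := funext hfg
    rw [lmNorm_const_mul (fun x => (hgpos x).le) hm hd.le]
    funext x
    exact mul_div_mul_left _ _ hd.ne'

lemma integral_prod_pow_card_eq_mul {f : ι → X → ℝ} (hf : ∀ i, Continuous (f i))
    (hpos : ∀ i x, 0 < f i x) :
    (∫ x, ∏ i, f i x ∂μ) ^ Fintype.card ι = (∏ i, ∫ x, f i x ^ Fintype.card ι ∂μ) *
      (∫ x, ∏ i, f i x / lmNorm μ (Fintype.card ι) (f i) ∂μ) ^ Fintype.card ι := by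
  set c := fun i => lmNorm μ (Fintype.card ι) (f i)
  have hc : ∏ i, c i ≠ 0 := prod_ne_zero_iff.2 fun i _ => (lmNorm_pos (hf i) (hpos i) _).ne'
  have hsplit : ∀ x, ∏ i, f i x = (∏ i, c i) * ∏ i, f i x / c i := fun x => by
    rw [prod_div_distrib, mul_div_cancel₀ _ hc]
  simp_rw [hsplit, integral_const_mul, mul_pow, ← prod_pow, c,
    lmNorm_pow (fun x => (hpos _ x).le) Fintype.card_ne_zero]

theorem integral_prod_pow_card_le {f : ι → X → ℝ} (hf : ∀ i, Continuous (f i))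
    (hpos : ∀ i x, 0 < f i x) :
    (∫ x, ∏ i, f i x ∂μ) ^ Fintype.card ι ≤ ∏ i, ∫ x, f i x ^ Fintype.card ι ∂μ := by
  have hg0 : ∀ i x, 0 ≤ f i x / lmNorm μ (Fintype.card ι) (f i) := fun i x =>
    div_nonneg (hpos i x).le (lmNorm_pos (hf i) (hpos i) _).le
  rw [integral_prod_pow_card_eq_mul hf hpos]
  exact mul_le_of_le_one_right (prod_nonneg fun i _ => (integral_pow_pos (hf i) (hpos i) _).le)
    (pow_le_one₀ (integral_nonneg fun x => prod_nonneg fun i _ => hg0 i x)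
      (integral_prod_le_one (fun i => (hf i).div_const _) hg0
        (fun i => integral_div_lmNorm_pow (hf i) (hpos i) Fintype.card_ne_zero)))

theorem integral_prod_pow_card_eq_iff {f : ι → X → ℝ} (hf : ∀ i, Continuous (f i))
    (hpos : ∀ i x, 0 < f i x) :
    (∫ x, ∏ i, f i x ∂μ) ^ Fintype.card ι = ∏ i, ∫ x, f i x ^ Fintype.card ι ∂μ ↔
      ∀ i j, ∃ d, 0 < d ∧ ∀ x, f i x = d * f j x := by
  have hprod : ∏ i, ∫ x, f i x ^ Fintype.card ι ∂μ ≠ 0 :=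
    prod_ne_zero_iff.2 fun i _ => (integral_pow_pos (hf i) (hpos i) _).ne'
  have hg0 : ∀ i x, 0 ≤ f i x / lmNorm μ (Fintype.card ι) (f i) := fun i x =>
    div_nonneg (hpos i x).le (lmNorm_pos (hf i) (hpos i) _).le
  rw [integral_prod_pow_card_eq_mul hf hpos, mul_eq_left₀ hprod,
    pow_eq_one_iff_of_nonneg (integral_nonneg fun x => prod_nonneg fun i _ => hg0 i x)
      Fintype.card_ne_zero,
    integral_prod_eq_one_iff (fun i => (hf i).div_const _) hg0
      (fun i => integral_div_lmNorm_pow (hf i) (hpos i) Fintype.card_ne_zero)]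
  exact forall₂_congr fun i j =>
    div_lmNorm_eq_iff (hf i) (hf j) (hpos i) (hpos j) Fintype.card_ne_zero

end Holder

section StarBody

variable {n m : ℕ}

instance [NeZero n] : Nonempty (Sph n) := NormedSpace.sphere_nonempty_rclike ℝ zero_le_one

instance [NeZero n] : (sphMeasure n).IsOpenPosMeasure :=
  inferInstanceAs (volume.toSphere.IsOpenPosMeasure)

instance [NeZero n] : IsFiniteMeasure (sphMeasure n) :=
  inferInstanceAs (IsFiniteMeasure volume.toSphere)

def restRadialProd (m : ℕ) (L : Fin n → StarBody n) (u : Sph n) : ℝ :=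
  ∏ i ∈ univ.filter (fun i : Fin n => ¬ (i : ℕ) < m), (L i).radial u

lemma prod_radial_eq_mul_restRadialProd (hmn : m ≤ n) (L : Fin n → StarBody n) (u : Sph n) :
    ∏ i, (L i).radial u =
      (∏ j : Fin m, (L (Fin.castLE hmn j)).radial u) * restRadialProd m L u := by
  rw [restRadialProd, ← prod_filter_mul_prod_filter_not univ (fun i : Fin n => (i : ℕ) < m)]
  congr 1
  exact prod_bij' (fun i hi => (⟨i, (mem_filter.mp hi).2⟩ : Fin m)) (fun j _ => Fin.castLE hmn j)
    (fun _ _ => mem_univ _) (fun j _ => mem_filter.mpr ⟨mem_univ _, j.isLt⟩)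
    (fun _ _ => rfl) (fun _ _ => rfl) (fun _ _ => rfl)

lemma restRadialProd_pos (L : Fin n → StarBody n) (u : Sph n) : 0 < restRadialProd m L u :=
  prod_pos fun i _ => (L i).pos u

def balancedRadial (hmn : m ≤ n) (L : Fin n → StarBody n) (j : Fin m) (u : Sph n) : ℝ :=
  (L (Fin.castLE hmn j)).radial u * restRadialProd m L u ^ (m : ℝ)⁻¹

lemma continuous_balancedRadial (hmn : m ≤ n) (L : Fin n → StarBody n) (j : Fin m) :
    Continuous (balancedRadial hmn L j) :=
  (L _).radial.continuous.mul <|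
    (continuous_finsetProd _ fun i _ => (L i).radial.continuous).rpow_const
      fun u => .inl (restRadialProd_pos L u).ne'

lemma balancedRadial_pos (hmn : m ≤ n) (L : Fin n → StarBody n) (j : Fin m) (u : Sph n) :
    0 < balancedRadial hmn L j u :=
  mul_pos ((L _).pos u) (Real.rpow_pos_of_pos (restRadialProd_pos L u) _)

lemma prod_balancedRadial (hmn : m ≤ n) (hm : m ≠ 0) (L : Fin n → StarBody n) (u : Sph n) :
    ∏ j, balancedRadial hmn L j u = ∏ i, (L i).radial u := by
  simp only [prod_radial_eq_mul_restRadialProd hmn, balancedRadial]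
  rw [prod_mul_distrib, prod_const, card_univ, Fintype.card_fin,
    Real.rpow_inv_natCast_pow (restRadialProd_pos L u).le hm]

lemma balancedRadial_pow (hmn : m ≤ n) (hm : m ≠ 0) (L : Fin n → StarBody n) (j : Fin m)
    (u : Sph n) : balancedRadial hmn L j u ^ m =
      ∏ i : Fin n, (if (i : ℕ) < m then L (Fin.castLE hmn j) else L i).radial u := by
  rw [prod_radial_eq_mul_restRadialProd hmn, balancedRadial, mul_pow,
    Real.rpow_inv_natCast_pow (restRadialProd_pos L u).le hm]
  congr 1
  · simp
  · exact prod_congr rfl fun i hi => by simp [(mem_filter.mp hi).2]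

lemma balancedRadial_proportional_iff (hmn : m ≤ n) (L : Fin n → StarBody n) (j k : Fin m) :
    (∃ d, 0 < d ∧ ∀ u, balancedRadial hmn L j u = d * balancedRadial hmn L k u) ↔
      Dilates n (L (Fin.castLE hmn j)) (L (Fin.castLE hmn k)) := by
  refine exists_congr fun d => and_congr_right fun _ => forall_congr' fun u => ?_
  rw [balancedRadial, balancedRadial, ← mul_assoc,
    mul_left_inj' (Real.rpow_pos_of_pos (restRadialProd_pos L u) _).ne']

end StarBody

theorem stmt5_general (n m : ℕ) [NeZero n] (hm : 1 ≤ m) (hmn : m ≤ n)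
    (L : Fin n → StarBody n) :
    dualMixedVol n L ^ m ≤
      ∏ j : Fin m, dualMixedVol n
        (fun i => if (i : ℕ) < m then L (Fin.castLE hmn j) else L i) ∧
    (dualMixedVol n L ^ m =
      ∏ j : Fin m, dualMixedVol n
        (fun i => if (i : ℕ) < m then L (Fin.castLE hmn j) else L i) ↔
      ∀ j k : Fin m, Dilates n (L (Fin.castLE hmn j)) (L (Fin.castLE hmn k))) := by
  have hm0 : m ≠ 0 := by omega
  have : Nonempty (Fin m) := ⟨⟨0, hm⟩⟩
  have hle := integral_prod_pow_card_le (μ := sphMeasure n)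
    (continuous_balancedRadial hmn L) (balancedRadial_pos hmn L)
  have heq := integral_prod_pow_card_eq_iff (μ := sphMeasure n)
    (continuous_balancedRadial hmn L) (balancedRadial_pos hmn L)
  simp only [Fintype.card_fin, prod_balancedRadial hmn hm0, balancedRadial_pow hmn hm0,
    balancedRadial_proportional_iff] at hle heq
  simp only [dualMixedVol, mul_pow, prod_mul_distrib, prod_const, card_univ, Fintype.card_fin]
  have hn : (0 : ℝ) < (1 / n) ^ m := by have := NeZero.pos n; positivity
  exact ⟨by gcongr, by rw [mul_right_inj' hn.ne', heq]⟩

/-- Dual Aleksandrov–Fenchel inequality: for star bodies L_1,…,L_n and 1 ≤ m ≤ n,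
Ṽ(L_1,…,L_n)^m ≤ ∏_{j=1}^m Ṽ(L_j,…,L_j,L_{m+1},…,L_n) (L_j appearing m times),
with equality iff L_1,…,L_m are dilates of one another. -/
theorem stmt5 (n m : ℕ) (hn : 3 ≤ n) [NeZero n] (hm : 1 ≤ m) (hmn : m ≤ n)
    (L : Fin n → StarBody n) :
    dualMixedVol n L ^ m ≤
      ∏ j : Fin m, dualMixedVol n
        (fun i => if (i : ℕ) < m then L (Fin.castLE hmn j) else L i) ∧
    (dualMixedVol n L ^ m =
      ∏ j : Fin m, dualMixedVol n
        (fun i => if (i : ℕ) < m then L (Fin.castLE hmn j) else L i) ↔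
      ∀ j k : Fin m, Dilates n (L (Fin.castLE hmn j)) (L (Fin.castLE hmn k))) :=
  stmt5_general n m hm hmn L
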